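/- arXiv:2410.07059 — 2 statements merged into one kernel-verified Lean document; each statement's English description precedes it below -/
import Mathlib

section
/- Let x = (√5 − 1)/2 and θ = (1/2)·arccos(1/2 + 1/(1+√5)). Consider in ℝ² the triangle with apex p and two points ℓ, n with |pℓ| = r, |pn| = (1+x)·r, and angle ∠ℓpn = 2θ. Then |ℓn| = r. -/
open EuclideanGeometry

/-- With x = (√5−1)/2 and θ = (1/2)·arccos(1/2 + 1/(1+√5)): if in ℝ² a triangle has apex p and
vertices l, n with |pl| = r, |pn| = (1+x)·r and ∠ l p n = 2θ, then |ln| = r. -/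
theorem stmt_7 (x θ r : ℝ) (hx : x = (Real.sqrt 5 - 1) / 2)
    (hθ : θ = (1 / 2) * Real.arccos (1 / 2 + 1 / (1 + Real.sqrt 5)))
    (hr : 0 < r) (p l n : EuclideanSpace ℝ (Fin 2))
    (hpl : dist p l = r) (hpn : dist p n = (1 + x) * r)
    (hangle : ∠ l p n = 2 * θ) :
    dist l n = r := by
  have h5 : Real.sqrt 5 ^ 2 = 5 := Real.sq_sqrt (by norm_num)
  have h5nn : (0:ℝ) ≤ Real.sqrt 5 := Real.sqrt_nonneg 5
  have h5ge : Real.sqrt 5 ≥ 2 := by nlinarith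
  have harg : (1:ℝ)/2 + 1/(1 + Real.sqrt 5) ∈ Set.Icc (-1:ℝ) 1 := by
    constructor
    · have : (0:ℝ) < 1 + Real.sqrt 5 := by linarith
      have : (0:ℝ) ≤ 1/(1 + Real.sqrt 5) := by positivity
      linarith
    · have h1 : (0:ℝ) < 1 + Real.sqrt 5 := by linarith
      have : 1/(1 + Real.sqrt 5) ≤ 1/2 := by
        rw [div_le_div_iff₀ h1 (by norm_num)]; linarith
      linarith
  have hcos : Real.cos (∠ l p n) = 1/2 + 1/(1 + Real.sqrt 5) := by
    rw [hangle, hθ]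
    rw [show 2 * ((1:ℝ)/2 * Real.arccos (1/2 + 1/(1 + Real.sqrt 5))) =
        Real.arccos (1/2 + 1/(1 + Real.sqrt 5)) by ring]
    exact Real.cos_arccos harg.1 harg.2
  have hlaw := EuclideanGeometry.law_cos l p n
  rw [hcos, dist_comm l p, dist_comm n p, hpl, hpn] at hlaw
  have hden : (1 + Real.sqrt 5) ≠ 0 := by positivity
  have hsq : dist l n * dist l n = r * r := by
    rw [hlaw, hx]
    field_simp
    nlinarith [h5]
  have := dist_nonneg (x := l) (y := n)
  nlinarith [hsq]
end

section
/- Let r > 0, x = (√5 − 1)/2, θ = (1/2)·arccos(1/2 + 1/(1+√5)). Define the annular circular block C = { q ∈ ℝ² : r ≤ |q − p| ≤ (1+x)·r and the angle between q − p and a fixed unit vector u is at most θ }. Then the Euclidean diameter of C is at most r. -/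
open Real InnerProductGeometry

local notation "⟪" x ", " y "⟫" => @inner ℝ _ _ x y

lemma aux_key {V : Type*} [NormedAddCommGroup V] [InnerProductSpace ℝ V]
    {u v : V} (hu : ‖u‖ = 1) {θ : ℝ} (hθ0 : 0 ≤ θ) (hθπ : θ ≤ π)
    (hc : 0 ≤ Real.cos θ)
    (hang : InnerProductGeometry.angle v u ≤ θ) :
    ⟪v, u⟫ ≥ ‖v‖ * Real.cos θ ∧
    ‖v - ⟪v, u⟫ • u‖ ≤ ‖v‖ * Real.sin θ := by
  have hcosθ := Real.cos_le_cos_of_nonneg_of_le_pi (InnerProductGeometry.angle_nonneg v u) hθπ hang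
  have hinner : Real.cos (InnerProductGeometry.angle v u) * (‖v‖ * ‖u‖) = ⟪v, u⟫ :=
    InnerProductGeometry.cos_angle_mul_norm_mul_norm v u
  rw [hu, mul_one] at hinner
  have h1 : ⟪v, u⟫ ≥ ‖v‖ * Real.cos θ := by
    rw [← hinner, mul_comm]
    exact mul_le_mul_of_nonneg_left hcosθ (norm_nonneg v)
  refine ⟨h1, ?_⟩
  have hsq : ‖⟪v, u⟫ • u‖ ^ 2 = ⟪v, u⟫ ^ 2 := by
    rw [norm_smul, hu, mul_one, Real.norm_eq_abs, sq_abs]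
  have hw2 : ‖v - ⟪v, u⟫ • u‖ ^ 2 = ‖v‖ ^ 2 - ⟪v, u⟫ ^ 2 := by
    rw [norm_sub_sq_real, real_inner_smul_right, hsq]
    ring
  have hsin : 0 ≤ Real.sin θ := Real.sin_nonneg_of_nonneg_of_le_pi hθ0 hθπ
  have hcs : Real.sin θ ^ 2 + Real.cos θ ^ 2 = 1 := Real.sin_sq_add_cos_sq θ
  have hle : ⟪v, u⟫ ≤ ‖v‖ := by
    calc ⟪v, u⟫ ≤ ‖v‖ * ‖u‖ := real_inner_le_norm v u
    _ = ‖v‖ := by rw [hu, mul_one]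
  have hvn : 0 ≤ ‖v‖ := norm_nonneg v
  have h0 : 0 ≤ ‖v‖ * Real.cos θ := mul_nonneg hvn hc
  have hw2le : ‖v - ⟪v, u⟫ • u‖ ^ 2 ≤ (‖v‖ * Real.sin θ) ^ 2 := by
    rw [hw2]; nlinarith [h1, h0, hle]
  nlinarith [norm_nonneg (v - ⟪v, u⟫ • u), mul_nonneg hvn hsin, hw2le]


set_option maxHeartbeats 1000000 in
/-- Let r > 0, x = (√5−1)/2, θ = (1/2)·arccos(1/2 + 1/(1+√5)).  The annular circular block
C = { q ∈ ℝ² : r ≤ |q−p| ≤ (1+x)·r and the angle between q−p and a fixed unit vector u is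
at most θ } has Euclidean diameter at most r. -/
theorem stmt_10 (x θ r : ℝ) (hx : x = (Real.sqrt 5 - 1) / 2)
    (hθ : θ = (1 / 2) * Real.arccos (1 / 2 + 1 / (1 + Real.sqrt 5)))
    (hr : 0 < r) (p u : EuclideanSpace ℝ (Fin 2)) (hu : ‖u‖ = 1)
    (C : Set (EuclideanSpace ℝ (Fin 2)))
    (hC : C = {q | r ≤ dist q p ∧ dist q p ≤ (1 + x) * r ∧
                   InnerProductGeometry.angle (q - p) u ≤ θ}) :
    Metric.diam C ≤ r := by
  have hs2 : Real.sqrt 5 ^ 2 = 5 := Real.sq_sqrt (by norm_num)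
  have hsge : (2:ℝ) ≤ Real.sqrt 5 := by
    nlinarith [Real.sqrt_nonneg 5]
  have hsle : Real.sqrt 5 ≤ 3 := by nlinarith [Real.sqrt_nonneg 5]
  set s := Real.sqrt 5 with hsdef
  set z : ℝ := 1 / 2 + 1 / (1 + s) with hzdef
  have hzval : z = (1 + s) / 4 := by
    rw [hzdef]
    rw [div_add_div _ _ (by norm_num) (by positivity : (1:ℝ)+s ≠ 0)]
    rw [div_eq_div_iff (by positivity) (by norm_num)]
    nlinarith
  have hz1 : z ≤ 1 := by rw [hzval]; linarith
  have hzm1 : -1 ≤ z := by rw [hzval]; linarith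
  -- θ facts
  have hθ0' : 0 ≤ θ := by
    rw [hθ]; have := Real.arccos_nonneg z; linarith
  have hθhalf : θ ≤ π / 2 := by
    rw [hθ]; have := Real.arccos_le_pi z; linarith
  have hθπ : θ ≤ π := le_trans hθhalf (by linarith [Real.pi_pos])
  have hcosnn : 0 ≤ Real.cos θ :=
    Real.cos_nonneg_of_mem_Icc ⟨by linarith [Real.pi_pos], hθhalf⟩
  have hcos2 : Real.cos θ ^ 2 - Real.sin θ ^ 2 = z := by
    have h2θ : Real.cos (2 * θ) = z := by
      rw [hθ]
      rw [show 2 * (1 / 2 * Real.arccos z) = Real.arccos z by ring]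
      exact Real.cos_arccos hzm1 hz1
    have := Real.cos_two_mul θ
    have := Real.sin_sq_add_cos_sq θ
    nlinarith
  subst hC
  apply Metric.diam_le_of_forall_dist_le hr.le
  rintro q1 ⟨h1r, h1R, h1a⟩ q2 ⟨h2r, h2R, h2a⟩
  set v1 := q1 - p
  set v2 := q2 - p
  have ha1 : dist q1 p = ‖v1‖ := dist_eq_norm q1 p
  have ha2 : dist q2 p = ‖v2‖ := dist_eq_norm q2 p
  rw [ha1] at h1r h1R
  rw [ha2] at h2r h2R
  obtain ⟨ht1, hw1⟩ := aux_key hu hθ0' hθπ hcosnn h1a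
  obtain ⟨ht2, hw2⟩ := aux_key hu hθ0' hθπ hcosnn h2a
  set t1 : ℝ := ⟪v1, u⟫
  set t2 : ℝ := ⟪v2, u⟫
  set w1 := v1 - t1 • u
  set w2 := v2 - t2 • u
  have hdecomp : ⟪w1, w2⟫ = ⟪v1, v2⟫ - t1 * t2 := by
    simp only [w1, w2, inner_sub_left, inner_sub_right, real_inner_smul_left,
      real_inner_smul_right, real_inner_self_eq_norm_sq, hu]
    have h12 : ⟪u, v2⟫ = t2 := (real_inner_comm u v2).symm
    have h21 : ⟪v1, u⟫ = t1 := rfl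
    rw [h12]
    ring
  have hcw : ⟪w1, w2⟫ ≥ -(‖w1‖ * ‖w2‖) := by
    have := abs_real_inner_le_norm w1 w2
    cases abs_le.mp this with
    | intro h _ => linarith
  -- lower bound on inner product of v1 v2
  have ht1nn : 0 ≤ ‖v1‖ * Real.cos θ := mul_nonneg (norm_nonneg _) hcosnn
  have ht2nn : 0 ≤ ‖v2‖ * Real.cos θ := mul_nonneg (norm_nonneg _) hcosnn
  have htt : t1 * t2 ≥ (‖v1‖ * Real.cos θ) * (‖v2‖ * Real.cos θ) :=
    mul_le_mul ht1 ht2 ht2nn (le_trans ht1nn ht1)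
  have hww : ‖w1‖ * ‖w2‖ ≤ (‖v1‖ * Real.sin θ) * (‖v2‖ * Real.sin θ) :=
    mul_le_mul hw1 hw2 (norm_nonneg _) (mul_nonneg (norm_nonneg _)
      (Real.sin_nonneg_of_nonneg_of_le_pi hθ0' hθπ))
  have hinnerlb : ⟪v1, v2⟫ ≥ ‖v1‖ * ‖v2‖ * z := by
    have : ⟪v1, v2⟫ = t1 * t2 + ⟪w1, w2⟫ := by rw [hdecomp]; ring
    rw [this, ← hcos2]
    nlinarith
  -- distance squared
  have hdist : dist q1 q2 = ‖v1 - v2‖ := by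
    rw [dist_eq_norm]
    congr 1
    simp [v1, v2]
  have hnsq : ‖v1 - v2‖ ^ 2 = ‖v1‖ ^ 2 - 2 * ⟪v1, v2⟫ + ‖v2‖ ^ 2 :=
    norm_sub_sq_real v1 v2
  have key : ‖v1 - v2‖ ^ 2 ≤ r ^ 2 := by
    rw [hnsq]
    have hxx : 1 + x = (1 + s) / 2 := by rw [hx]; ring
    rw [hxx] at h1R h2R
    set a := ‖v1‖
    set b := ‖v2‖
    have e1 : 0 ≤ (a - r) * ((1 + s) / 2 * r - a) :=
      mul_nonneg (by linarith) (by linarith)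
    have e2 : 0 ≤ (b - r) * ((1 + s) / 2 * r - b) :=
      mul_nonneg (by linarith) (by linarith)
    have e3 : 0 ≤ (1 + s) / 2 * (((1 + s) / 2 * r - a) * ((1 + s) / 2 * r - b)) :=
      mul_nonneg (by linarith) (mul_nonneg (by linarith) (by linarith))
    have hq1 : s ^ 2 * r ^ 2 = 5 * r ^ 2 := by rw [hs2]
    have hq2 : s ^ 2 * (r * a) = 5 * (r * a) := by rw [hs2]
    have hq3 : s ^ 2 * (r * b) = 5 * (r * b) := by rw [hs2]
    have hq4 : s ^ 2 * (a * b) = 5 * (a * b) := by rw [hs2]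
    have hq5 : s ^ 3 * r ^ 2 = 5 * (s * r ^ 2) := by
      rw [pow_succ, mul_comm (s^2) s, mul_assoc, hs2]; ring
    have hib : ⟪v1, v2⟫ ≥ a * b * ((1 + s) / 4) := by rw [← hzval]; exact hinnerlb
    linarith [e1, e2, e3, hq1, hq2, hq3, hq4, hq5, hib]
  rw [hdist]
  nlinarith [norm_nonneg (v1 - v2), key, hr]
end
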